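/- arXiv:2508.08427 — 2 statements merged into one kernel-verified Lean document; each statement's English description precedes it below -/
import Mathlib

section
/- For every q ≥ 0, the infimum of the grand canonical Hamiltonian over the mass shell of mass q satisfies: inf{ H_{ℝ²}(φ) : φ ∈ H¹(ℝ²), ‖φ‖_{L²(ℝ²)}² = q } = q²·(A − A₀). -/
noncomputable section

open MeasureTheory

/-- The plane ℝ². -/
abbrev R2 : Type := EuclideanSpace ℝ (Fin 2)

/-- Squared L²(ℝ²) norm. -/
def L2sq (φ : R2 → ℝ) : ℝ := ∫ x : R2, (φ x) ^ 2

/-- L²(ℝ²) norm. -/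
def L2norm (φ : R2 → ℝ) : ℝ := Real.sqrt (L2sq φ)

/-- Squared L²(ℝ²) norm of the gradient. -/
def gradL2sq (φ : R2 → ℝ) : ℝ := ∫ x : R2, ‖fderiv ℝ φ x‖ ^ 2

/-- L²(ℝ²) norm of the gradient. -/
def gradL2norm (φ : R2 → ℝ) : ℝ := Real.sqrt (gradL2sq φ)

/-- Cubed L³(ℝ²) norm, i.e. ∫ |φ|³. -/
def L3cube (φ : R2 → ℝ) : ℝ := ∫ x : R2, |φ x| ^ 3

/-- Membership in H¹(ℝ²): φ and its gradient are square integrable (together with the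
L³ integrability, which holds for every H¹(ℝ²) function by Sobolev embedding). -/
structure InH1 (φ : R2 → ℝ) : Prop where
  diff : Differentiable ℝ φ
  memL2 : MemLp φ 2 volume
  gradMemL2 : MemLp (fun x => ‖fderiv ℝ φ x‖) 2 volume
  memL3 : MemLp φ 3 volume

/-- The Weinstein functional 𝓕(φ) = ‖∇φ‖_{L²}‖φ‖_{L²}²/‖φ‖_{L³}³. -/
def weinstein (φ : R2 → ℝ) : ℝ := gradL2norm φ * (L2norm φ) ^ 2 / L3cube φ

/-- The Laplacian on ℝ². -/
def lap (φ : R2 → ℝ) (x : R2) : ℝ :=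
  ∑ i : Fin 2, fderiv ℝ (fun y => fderiv ℝ φ y (EuclideanSpace.single i 1)) x
    (EuclideanSpace.single i 1)

/-- φ vanishes almost everywhere (i.e. φ = 0 as an element of H¹). -/
def aeZero (φ : R2 → ℝ) : Prop := φ =ᵐ[volume] fun _ => 0

/-- `Q` is a (nonzero) minimizer of the Weinstein functional over nonzero H¹(ℝ²) functions
that solves the elliptic equation ΔQ + 2Q² − 2Q = 0. -/
structure IsGNSOptimizer (Q : R2 → ℝ) : Prop where
  h1 : InH1 Q
  ne : ¬ aeZero Q
  isMin : ∀ φ : R2 → ℝ, InH1 φ → ¬ aeZero φ → weinstein Q ≤ weinstein φ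
  ell : ∀ x, lap Q x + 2 * (Q x) ^ 2 - 2 * Q x = 0

/-- The Hamiltonian H₀(φ) = (1/2)∫|∇φ|² + (σ/3)∫φ³ on ℝ². -/
def H0f (σ : ℝ) (φ : R2 → ℝ) : ℝ :=
  (1/2) * gradL2sq φ + (σ/3) * ∫ x : R2, (φ x) ^ 3

/-- The grand canonical Hamiltonian H_{ℝ²}(φ) = H₀(φ) + A(∫φ²)². -/
def HR2 (σ A : ℝ) (φ : R2 → ℝ) : ℝ :=
  H0f σ φ + A * (∫ x : R2, (φ x) ^ 2) ^ 2

/-- The set of values of H₀ on the unit L² sphere of H¹(ℝ²). -/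
def sphereVals (σ : ℝ) : Set ℝ :=
  {y | ∃ φ : R2 → ℝ, InH1 φ ∧ L2norm φ = 1 ∧ y = H0f σ φ}

/-- The critical chemical potential A₀ = −inf{H₀(φ) : φ ∈ H¹(ℝ²), ‖φ‖_{L²} = 1}. -/
def A0 (σ : ℝ) : ℝ := - sInf (sphereVals σ)

/-- The rescaled soliton Q_{q,x₀}(x) = q·Q(q^{1/2}(x − x₀)). -/
def solQ (Q : R2 → ℝ) (q : ℝ) (x₀ : R2) : R2 → ℝ :=
  fun x => q * Q (Real.sqrt q • (x - x₀))

section Dilation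

variable {E : Type*} [NormedAddCommGroup E] [NormedSpace ℝ E]

def dilate (c l : ℝ) (φ : E → ℝ) : E → ℝ := fun x => c * φ (l • x)

theorem Differentiable.dilate {φ : E → ℝ} (hφ : Differentiable ℝ φ) (c l : ℝ) :
    Differentiable ℝ (dilate c l φ) :=
  (hφ.comp (differentiable_id.const_smul l)).const_mul c

theorem fderiv_dilate {φ : E → ℝ} (hφ : Differentiable ℝ φ) (c l : ℝ) (x : E) :
    fderiv ℝ (dilate c l φ) x = (c * l) • fderiv ℝ φ (l • x) := by
  have hsmul : HasFDerivAt (fun y : E => l • y) (l • ContinuousLinearMap.id ℝ E) x :=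
    (hasFDerivAt_id x).const_smul l
  have hcomp := (((hφ (l • x)).hasFDerivAt).comp x hsmul).const_mul c
  have hlin : c • (fderiv ℝ φ (l • x)).comp (l • ContinuousLinearMap.id ℝ E)
      = (c * l) • fderiv ℝ φ (l • x) := by
    ext v
    simp [mul_assoc]
  rw [← hlin]
  exact hcomp.fderiv

theorem MeasureTheory.MemLp.dilate [MeasurableSpace E] [BorelSpace E] [FiniteDimensional ℝ E]
    {μ : Measure E} [μ.IsAddHaarMeasure] {p : ENNReal} {φ : E → ℝ} (hφ : MemLp φ p μ)
    (c : ℝ) {l : ℝ} (hl : l ≠ 0) : MemLp (dilate c l φ) p μ := by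
  have hemb : MeasurableEmbedding (fun x : E => l • x) :=
    (Homeomorph.smulOfNeZero l hl).measurableEmbedding
  have hmap : MemLp φ p (μ.map (fun x : E => l • x)) := by
    rw [Measure.map_addHaar_smul μ hl]
    exact hφ.smul_measure ENNReal.ofReal_ne_top
  exact (hemb.memLp_map_measure_iff.1 hmap).const_mul c

end Dilation

section ScalingR2

theorem integral_comp_smul_R2 (f : R2 → ℝ) (l : ℝ) :
    ∫ x : R2, f (l • x) = (l ^ 2)⁻¹ * ∫ x : R2, f x := by
  rw [Measure.integral_comp_smul volume f l, finrank_euclideanSpace_fin, smul_eq_mul,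
    abs_of_nonneg (inv_nonneg.2 (sq_nonneg l))]

variable {φ : R2 → ℝ}

theorem InH1.dilate (hφ : InH1 φ) (c : ℝ) {l : ℝ} (hl : l ≠ 0) : InH1 (dilate c l φ) where
  diff := hφ.diff.dilate c l
  memL2 := hφ.memL2.dilate c hl
  gradMemL2 := by
    have hnorm : (‖fderiv ℝ (_root_.dilate c l φ) ·‖)
        = _root_.dilate |c * l| l (‖fderiv ℝ φ ·‖) := by
      funext x
      rw [fderiv_dilate hφ.diff, norm_smul, Real.norm_eq_abs]
      rfl
    rw [hnorm]
    exact hφ.gradMemL2.dilate _ hl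
  memL3 := hφ.memL3.dilate c hl

theorem integral_pow_dilate (φ : R2 → ℝ) (n : ℕ) (c l : ℝ) :
    ∫ x : R2, dilate c l φ x ^ n = c ^ n / l ^ 2 * ∫ x : R2, φ x ^ n := by
  simp_rw [dilate, mul_pow]
  rw [integral_const_mul, integral_comp_smul_R2 (φ · ^ n)]
  ring

theorem L2sq_dilate (φ : R2 → ℝ) (c l : ℝ) : L2sq (dilate c l φ) = c ^ 2 / l ^ 2 * L2sq φ :=
  integral_pow_dilate φ 2 c l

theorem gradL2sq_dilate (hφ : Differentiable ℝ φ) (c : ℝ) {l : ℝ} (hl : l ≠ 0) :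
    gradL2sq (dilate c l φ) = c ^ 2 * gradL2sq φ := by
  have hpt : ∀ x : R2, ‖fderiv ℝ (dilate c l φ) x‖ ^ 2
      = (c * l) ^ 2 * ‖fderiv ℝ φ (l • x)‖ ^ 2 := fun x => by
    rw [fderiv_dilate hφ, norm_smul, Real.norm_eq_abs, mul_pow, sq_abs]
  simp_rw [gradL2sq, hpt]
  rw [integral_const_mul, integral_comp_smul_R2 (‖fderiv ℝ φ ·‖ ^ 2)]
  field_simp

theorem H0f_dilate (σ : ℝ) (hφ : Differentiable ℝ φ) (c : ℝ) {l : ℝ} (hl : l ≠ 0) :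
    H0f σ (dilate c l φ)
      = c ^ 2 / 2 * gradL2sq φ + c ^ 3 / l ^ 2 * (σ / 3 * ∫ x : R2, φ x ^ 3) := by
  rw [H0f, gradL2sq_dilate hφ c hl, integral_pow_dilate]
  ring

end ScalingR2

theorem HR2_eq (σ A : ℝ) (φ : R2 → ℝ) : HR2 σ A φ = H0f σ φ + A * L2sq φ ^ 2 := rfl

theorem InH1.eq_zero_of_L2sq_eq_zero {φ : R2 → ℝ} (hφ : InH1 φ) (h : L2sq φ = 0) :
    φ = 0 := by
  have hsq : (fun x => φ x ^ 2) =ᵐ[volume] 0 :=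
    (integral_eq_zero_iff_of_nonneg (fun x => sq_nonneg _) hφ.memL2.integrable_sq).1 h
  have hae : φ =ᵐ[volume] 0 := by
    filter_upwards [hsq] with x hx
    exact pow_eq_zero_iff two_ne_zero |>.1 hx
  exact (Continuous.ae_eq_iff_eq volume hφ.diff.continuous continuous_const).1 hae

theorem inH1_zero : InH1 (0 : R2 → ℝ) where
  diff := differentiable_const 0
  memL2 := MemLp.zero
  gradMemL2 := by simp
  memL3 := MemLp.zero

theorem HR2_zero (σ A : ℝ) : HR2 σ A 0 = 0 := by
  simp [HR2, H0f, gradL2sq]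

def massShellVals (σ A q : ℝ) : Set ℝ :=
  {y | ∃ φ : R2 → ℝ, InH1 φ ∧ L2sq φ = q ∧ y = HR2 σ A φ}

theorem massShellVals_zero (σ A : ℝ) : massShellVals σ A 0 = {0} := by
  ext y
  constructor
  · rintro ⟨φ, hφ, hmass, rfl⟩
    rw [hφ.eq_zero_of_L2sq_eq_zero hmass, HR2_zero, Set.mem_singleton_iff]
  · rintro rfl
    exact ⟨0, inH1_zero, by simp [L2sq], (HR2_zero σ A).symm⟩

-- The dilation `φ ↦ q φ(√q ·)` maps the unit sphere onto the mass shell `q` and multiplies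
-- `H₀` by `q²`, while the quartic term is `A q²` on the whole shell.
theorem massShellVals_eq_image (σ A : ℝ) {q : ℝ} (hq : 0 < q) :
    massShellVals σ A q = (fun y => q ^ 2 * y + A * q ^ 2) '' sphereVals σ := by
  have hsqrt : Real.sqrt q ≠ 0 := (Real.sqrt_pos.2 hq).ne'
  have hsqrt_sq : Real.sqrt q ^ 2 = q := Real.sq_sqrt hq.le
  ext y
  constructor
  · rintro ⟨φ, hφ, hmass, rfl⟩
    have hinv_sq : (Real.sqrt q)⁻¹ ^ 2 = q⁻¹ := by rw [inv_pow, hsqrt_sq]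
    set ψ := dilate q⁻¹ (Real.sqrt q)⁻¹ φ
    have hψ : InH1 ψ := hφ.dilate q⁻¹ (inv_ne_zero hsqrt)
    refine ⟨H0f σ ψ, ⟨ψ, hψ, ?_, rfl⟩, ?_⟩
    · rw [L2norm, L2sq_dilate, hinv_sq, hmass, Real.sqrt_eq_one]
      field_simp
    · rw [H0f_dilate σ hφ.diff _ (inv_ne_zero hsqrt), hinv_sq, HR2_eq, hmass, H0f]
      field_simp
  · rintro ⟨_, ⟨ψ, hψ, hnorm, rfl⟩, rfl⟩
    have hunit : L2sq ψ = 1 := Real.sqrt_eq_one.1 hnorm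
    refine ⟨dilate q (Real.sqrt q) ψ, hψ.dilate q hsqrt, ?_, ?_⟩
    · rw [L2sq_dilate, hsqrt_sq, hunit]
      field_simp
    · rw [HR2_eq, L2sq_dilate, H0f_dilate σ hψ.diff q hsqrt, hsqrt_sq, hunit, H0f]
      field_simp

theorem csInf_image_mul_add {s : Set ℝ} (hne : s.Nonempty) (hbdd : BddBelow s) {a : ℝ}
    (ha : 0 ≤ a) (b : ℝ) : sInf ((fun y => a * y + b) '' s) = a * sInf s + b :=
  (Monotone.map_csInf_of_continuousAt (by fun_prop)
    (fun _ _ h => by gcongr) hne hbdd).symm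

theorem statement_4_general (σ A : ℝ)
    (hne : (sphereVals σ).Nonempty) (hbdd : BddBelow (sphereVals σ)) :
    ∀ q : ℝ, 0 ≤ q →
      sInf {y | ∃ φ : R2 → ℝ, InH1 φ ∧ L2sq φ = q ∧ y = HR2 σ A φ}
        = q ^ 2 * (A - A0 σ) := by
  intro q hq
  change sInf (massShellVals σ A q) = _
  rcases hq.eq_or_lt with rfl | hq
  · rw [massShellVals_zero, csInf_singleton]
    ring
  · rw [massShellVals_eq_image σ A hq, csInf_image_mul_add hne hbdd (sq_nonneg q), A0]
    ring

/-- For every q ≥ 0, the infimum of the grand canonical Hamiltonian over the mass shell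
{‖φ‖_{L²}² = q} equals q²·(A − A₀). -/
theorem statement_4 (σ A : ℝ) (hσ : σ ≠ 0)
    (hne : (sphereVals σ).Nonempty) (hbdd : BddBelow (sphereVals σ)) (hpos : 0 < A0 σ) :
    ∀ q : ℝ, 0 ≤ q →
      sInf {y | ∃ φ : R2 → ℝ, InH1 φ ∧ L2sq φ = q ∧ y = HR2 σ A φ}
        = q ^ 2 * (A - A0 σ) :=
  statement_4_general σ A hne hbdd
end
end

section
/- Suppose A < A₀. Then the grand canonical Hamiltonian is unbounded from below: inf{ H_{ℝ²}(φ) : φ ∈ H¹(ℝ²) } = −∞, and in particular H_{ℝ²} admits no minimizer over H¹(ℝ²). -/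
noncomputable section

open MeasureTheory

/-! The mass-critical rescaling `φ ↦ q φ(√q ·)` multiplies `∫ φ²` by `q` and both `∫ |∇φ|²` and
`∫ φ³` by `q²`, so `H_{ℝ²}` is homogeneous of degree two under it. Since `A < A₀`, some unit-mass
`φ` has `H₀(φ) + A < 0`, that is `H_{ℝ²}(φ) < 0`, and letting `q → ∞` drives `H_{ℝ²}` to `−∞`. -/

open Filter

theorem MeasureTheory.MemLp.comp_smul {E F : Type*} [NormedAddCommGroup E] [NormedSpace ℝ E]
    [MeasurableSpace E] [BorelSpace E] [FiniteDimensional ℝ E] {μ : Measure E}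
    [μ.IsAddHaarMeasure] [NormedAddCommGroup F] {p : ENNReal} {f : E → F} (hf : MemLp f p μ)
    {c : ℝ} (hc : c ≠ 0) : MemLp (fun x => f (c • x)) p μ := by
  have hmap : MemLp f p (μ.map (c • ·)) := by
    rw [Measure.map_addHaar_smul μ hc]
    exact hf.smul_measure ENNReal.ofReal_ne_top
  exact hmap.comp_of_map (measurable_const_smul c).aemeasurable

theorem norm_fderiv_const_mul_comp_smul {E : Type*} [NormedAddCommGroup E] [NormedSpace ℝ E]
    {φ : E → ℝ} (a c : ℝ) {x : E} (hφ : DifferentiableAt ℝ φ (c • x)) :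
    ‖fderiv ℝ (fun y => a * φ (c • y)) x‖ = |a * c| * ‖fderiv ℝ φ (c • x)‖ := by
  have hcomp : HasFDerivAt (fun y => a * φ (c • y))
      (a • (fderiv ℝ φ (c • x)).comp (c • ContinuousLinearMap.id ℝ E)) x :=
    (hφ.hasFDerivAt.comp x ((hasFDerivAt_id x).const_smul c)).const_mul a
  have hlin : (fderiv ℝ φ (c • x)).comp (c • ContinuousLinearMap.id ℝ E)
      = c • fderiv ℝ φ (c • x) := by
    ext v; simp
  rw [hcomp.fderiv, hlin, smul_smul, norm_smul, Real.norm_eq_abs]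

theorem integral_comp_sqrt_smul (f : R2 → ℝ) {q : ℝ} (hq : 0 ≤ q) :
    ∫ x : R2, f (Real.sqrt q • x) = q⁻¹ * ∫ x : R2, f x := by
  rw [Measure.integral_comp_smul_of_nonneg volume f _ (hR := Real.sqrt_nonneg q),
    finrank_euclideanSpace_fin, Real.sq_sqrt hq, smul_eq_mul]

theorem solQ_zero (φ : R2 → ℝ) (q : ℝ) :
    solQ φ q 0 = fun x => q * φ (Real.sqrt q • x) := by
  unfold solQ
  simp only [sub_zero]

theorem integral_pow_solQ (φ : R2 → ℝ) {q : ℝ} (hq : 0 ≤ q) (n : ℕ) :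
    ∫ x : R2, (solQ φ q 0 x) ^ n = q ^ n * q⁻¹ * ∫ x : R2, (φ x) ^ n := by
  simp only [solQ_zero, mul_pow]
  rw [integral_const_mul, integral_comp_sqrt_smul (fun y => φ y ^ n) hq, mul_assoc]

theorem gradL2sq_solQ {φ : R2 → ℝ} (hφ : Differentiable ℝ φ) {q : ℝ} (hq : 0 ≤ q) :
    gradL2sq (solQ φ q 0) = q ^ 2 * gradL2sq φ := by
  have hnorm (x : R2) : ‖fderiv ℝ (solQ φ q 0) x‖ ^ 2
      = q ^ 3 * ‖fderiv ℝ φ (Real.sqrt q • x)‖ ^ 2 := by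
    rw [solQ_zero, norm_fderiv_const_mul_comp_smul q _ (hφ _), mul_pow, sq_abs, mul_pow,
      Real.sq_sqrt hq]
    ring
  unfold gradL2sq
  simp only [hnorm]
  rw [integral_const_mul, integral_comp_sqrt_smul (fun y => ‖fderiv ℝ φ y‖ ^ 2) hq]
  rcases hq.eq_or_lt with rfl | hq
  · simp
  · field_simp

theorem HR2_solQ (σ A : ℝ) {φ : R2 → ℝ} (hφ : Differentiable ℝ φ) {q : ℝ} (hq : 0 ≤ q) :
    HR2 σ A (solQ φ q 0) = q ^ 2 * HR2 σ A φ := by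
  unfold HR2 H0f
  rw [gradL2sq_solQ hφ hq, integral_pow_solQ φ hq, integral_pow_solQ φ hq]
  rcases hq.eq_or_lt with rfl | hq
  · simp
  · field_simp

theorem inH1_solQ {φ : R2 → ℝ} (hφ : InH1 φ) {q : ℝ} (hq : 0 < q) : InH1 (solQ φ q 0) := by
  have hc : Real.sqrt q ≠ 0 := (Real.sqrt_pos.2 hq).ne'
  refine ⟨?_, ?_, ?_, ?_⟩ <;> rw [solQ_zero]
  · have hd := hφ.diff
    fun_prop
  · exact (hφ.memL2.comp_smul hc).const_mul q
  · simp only [norm_fderiv_const_mul_comp_smul q _ (hφ.diff _)]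
    exact (hφ.gradMemL2.comp_smul hc).const_mul _
  · exact (hφ.memL3.comp_smul hc).const_mul q

theorem exists_HR2_neg {σ A : ℝ} (hne : (sphereVals σ).Nonempty) (hA : A < A0 σ) :
    ∃ φ, InH1 φ ∧ HR2 σ A φ < 0 := by
  obtain ⟨_, ⟨φ, hφ, hnorm, rfl⟩, hlt⟩ := exists_lt_of_csInf_lt hne (lt_neg_of_lt_neg hA)
  have hmass : ∫ x : R2, (φ x) ^ 2 = 1 := Real.sqrt_eq_one.1 hnorm
  refine ⟨φ, hφ, ?_⟩
  rw [HR2, hmass]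
  linarith

theorem exists_HR2_lt {σ A : ℝ} {φ : R2 → ℝ} (hφ : InH1 φ) (hneg : HR2 σ A φ < 0) (M : ℝ) :
    ∃ ψ, InH1 ψ ∧ HR2 σ A ψ < M := by
  have hdiv : Tendsto (fun q : ℝ => HR2 σ A φ * q ^ 2) atTop atBot :=
    tendsto_neg_const_mul_pow_atTop two_ne_zero hneg
  obtain ⟨q, hqM, hq⟩ := ((hdiv.eventually (eventually_lt_atBot M)).and
    (eventually_gt_atTop 0)).exists
  refine ⟨solQ φ q 0, inH1_solQ hφ hq, ?_⟩
  rwa [HR2_solQ σ A hφ.diff hq.le, mul_comm]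

theorem statement_9_general (σ A : ℝ)
    (hne : (sphereVals σ).Nonempty) (hA : A < A0 σ) :
    (∀ M : ℝ, ∃ φ : R2 → ℝ, InH1 φ ∧ HR2 σ A φ < M) ∧
    ¬ ∃ φ : R2 → ℝ, InH1 φ ∧ ∀ ψ : R2 → ℝ, InH1 ψ → HR2 σ A φ ≤ HR2 σ A ψ := by
  obtain ⟨φ, hφ, hneg⟩ := exists_HR2_neg hne hA
  have hunbdd := exists_HR2_lt hφ hneg
  refine ⟨hunbdd, fun ⟨φ₀, _, hmin⟩ => ?_⟩
  obtain ⟨ψ, hψ, hlt⟩ := hunbdd (HR2 σ A φ₀)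
  exact (hmin ψ hψ).not_gt hlt

/-- Subcritical taming A < A₀: the grand canonical Hamiltonian is unbounded from below,
inf{H_{ℝ²}(φ) : φ ∈ H¹(ℝ²)} = −∞, and in particular admits no minimizer. -/
theorem statement_9 (σ A : ℝ) (hσ : σ ≠ 0)
    (hne : (sphereVals σ).Nonempty) (hbdd : BddBelow (sphereVals σ)) (hpos : 0 < A0 σ)
    (hA : A < A0 σ) :
    (∀ M : ℝ, ∃ φ : R2 → ℝ, InH1 φ ∧ HR2 σ A φ < M) ∧
    ¬ ∃ φ : R2 → ℝ, InH1 φ ∧ ∀ ψ : R2 → ℝ, InH1 ψ → HR2 σ A φ ≤ HR2 σ A ψ :=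
  statement_9_general σ A hne hA
end
end
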